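/- arXiv:1808.07505 — 13 statements merged into one kernel-verified Lean document; each statement's English description precedes it below -/
import Mathlib

section
/- Let B, C ∈ ℤ and let R = ℤ[X]/(X² + BX + C) with q the image of X. For integers m₁, m₂, n₁, n₂, set m = m₁ + m₂·q and n = n₁ + n₂·q in R. Then m and n are coprime in R (IsCoprime: there exist α, β ∈ R with α·m + β·n = 1) if and only if the matrix representations B_m = [[m₁, −C·m₂], [m₂, m₁ − B·m₂]] and B_n = [[n₁, −C·n₂], [n₂, n₁ − B·n₂]] are left coprime integer matrices. -/
open Polynomial

/-- In `R = ℤ[X]/(X² + BX + C)` with `q` the image of `X`, the quadratic integers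
`m = m₁ + m₂·q` and `n = n₁ + n₂·q` are coprime if and only if their matrix representations
are left coprime integer matrices. -/
theorem isCoprime_iff_matrix_representations_left_coprime (B C m₁ m₂ n₁ n₂ : ℤ) :
    (letI R := AdjoinRoot ((X : ℤ[X]) ^ 2 + Polynomial.C B * X + Polynomial.C C)
     letI q : R := AdjoinRoot.root _
     IsCoprime ((m₁ : R) + (m₂ : R) * q) ((n₁ : R) + (n₂ : R) * q)) ↔
    (∃ U V : Matrix (Fin 2) (Fin 2) ℤ,
      !![m₁, -C * m₂; m₂, m₁ - B * m₂] * U + !![n₁, -C * n₂; n₂, n₁ - B * n₂] * V = 1) := by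
  set g : ℤ[X] := (X : ℤ[X]) ^ 2 + Polynomial.C B * X + Polynomial.C C with hgdef
  set R := AdjoinRoot g with hRdef
  set q : R := AdjoinRoot.root g with hqdef
  have hmonic : g.Monic := by rw [hgdef]; monicity!
  have hdeg : g.degree = 2 := by rw [hgdef]; compute_degree!
  have hq : q ^ 2 + (B : R) * q + (C : R) = 0 := by
    have h : eval₂ (AdjoinRoot.of g) q ((X : ℤ[X]) ^ 2 + Polynomial.C B * X + Polynomial.C C)
        = 0 := by rw [← hgdef]; exact AdjoinRoot.eval₂_root g
    simp only [eval₂_add, eval₂_mul, eval₂_pow, eval₂_X, eval₂_C] at h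
    simp only [eq_intCast] at h
    exact h
  have hmul : ∀ a₁ a₂ b₁ b₂ : ℤ, ((a₁ : R) + (a₂ : R) * q) * ((b₁ : R) + (b₂ : R) * q) =
      ((a₁ * b₁ - C * (a₂ * b₂) : ℤ) : R) + ((a₁ * b₂ + a₂ * b₁ - B * (a₂ * b₂) : ℤ) : R) * q := by
    intro a₁ a₂ b₁ b₂
    have cm : ∀ x y : ℤ, ((x * y : ℤ) : R) = (x : R) * (y : R) := fun x y => Int.cast_mul x y
    have cs : ∀ x y : ℤ, ((x - y : ℤ) : R) = (x : R) - (y : R) := fun x y => Int.cast_sub x y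
    have ca : ∀ x y : ℤ, ((x + y : ℤ) : R) = (x : R) + (y : R) := fun x y => Int.cast_add x y
    simp only [cm, cs, ca]
    linear_combination ((a₂ : R) * b₂) * hq
  have hinj : ∀ a b : ℤ, (a : R) + (b : R) * q = 0 → a = 0 ∧ b = 0 := by
    intro a b hab
    have h1 : AdjoinRoot.mk g (Polynomial.C b * X + Polynomial.C a) = 0 := by
      simpa [AdjoinRoot.mk_C, AdjoinRoot.mk_X, eq_intCast, add_comm, mul_comm] using hab
    rw [AdjoinRoot.mk_eq_zero] at h1
    have h2 : Polynomial.C b * X + Polynomial.C a = 0 := by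
      refine eq_zero_of_dvd_of_degree_lt h1 ?_
      rw [hdeg]
      exact lt_of_le_of_lt (degree_linear_le) (by decide)
    constructor
    · have := congrArg (fun p => Polynomial.coeff p 0) h2
      simp only [coeff_add, coeff_C_mul, coeff_X_zero, coeff_C, coeff_zero, mul_zero,
        if_pos rfl, zero_add] at this
      simpa using this
    · have := congrArg (fun p => Polynomial.coeff p 1) h2
      simp only [coeff_add, coeff_C_mul, coeff_X_one, coeff_C, coeff_zero, mul_one] at this
      simpa using this
  have hsurj : ∀ x : R, ∃ a b : ℤ, x = (a : R) + (b : R) * q := by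
    intro x
    obtain ⟨p, rfl⟩ := AdjoinRoot.mk_surjective x
    refine ⟨(p %ₘ g).coeff 0, (p %ₘ g).coeff 1, ?_⟩
    have h1 : AdjoinRoot.mk g p = AdjoinRoot.mk g (p %ₘ g) := by
      conv_lhs => rw [← Polynomial.modByMonic_add_div p g]
      simp [AdjoinRoot.mk_self]
    have h2 : p %ₘ g = Polynomial.C ((p %ₘ g).coeff 1) * X + Polynomial.C ((p %ₘ g).coeff 0) := by
      refine eq_X_add_C_of_degree_le_one ?_
      have := degree_modByMonic_lt p hmonic
      rw [hdeg] at this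
      exact Order.le_of_lt_succ (by exact_mod_cast this)
    rw [h1]
    conv_lhs => rw [h2]
    simp only [map_add, map_mul, AdjoinRoot.mk_X, AdjoinRoot.mk_C, eq_intCast, map_intCast]
    ring
  constructor
  · rintro ⟨α, β, h⟩
    obtain ⟨a₁, a₂, rfl⟩ := hsurj α
    obtain ⟨b₁, b₂, rfl⟩ := hsurj β
    rw [hmul, hmul] at h
    have hz : ((a₁ * m₁ - C * (a₂ * m₂) + (b₁ * n₁ - C * (b₂ * n₂)) - 1 : ℤ) : R) +
        ((a₁ * m₂ + a₂ * m₁ - B * (a₂ * m₂) + (b₁ * n₂ + b₂ * n₁ - B * (b₂ * n₂)) : ℤ) : R) * q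
        = 0 := by
      push_cast at h ⊢
      linear_combination h
    obtain ⟨e1, e2⟩ := hinj _ _ hz
    have hP₁ : a₁ * m₁ - C * (a₂ * m₂) + (b₁ * n₁ - C * (b₂ * n₂)) = 1 := by linarith
    have hP₂ : a₁ * m₂ + a₂ * m₁ - B * (a₂ * m₂) + (b₁ * n₂ + b₂ * n₁ - B * (b₂ * n₂)) = 0 := e2
    refine ⟨!![a₁, -C * a₂; a₂, a₁ - B * a₂], !![b₁, -C * b₂; b₂, b₁ - B * b₂], ?_⟩
    ext i j
    fin_cases i <;> fin_cases j <;>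
      simp only [Matrix.add_apply, Matrix.mul_apply, Fin.sum_univ_two, Matrix.one_apply] <;>
      simp
    · linear_combination hP₁
    · linear_combination (-C) * hP₂
    · linear_combination hP₂
    · linear_combination hP₁ - B * hP₂
  · rintro ⟨U, V, hUV⟩
    have h00 := congrFun (congrFun hUV 0) 0
    have h10 := congrFun (congrFun hUV 1) 0
    simp only [Matrix.add_apply, Matrix.mul_apply, Fin.sum_univ_two, Matrix.one_apply] at h00 h10
    simp at h00 h10
    refine ⟨(U 0 0 : R) + (U 1 0 : R) * q, (V 0 0 : R) + (V 1 0 : R) * q, ?_⟩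
    rw [hmul, hmul]
    have e1 : U 0 0 * m₁ - C * (U 1 0 * m₂) + (V 0 0 * n₁ - C * (V 1 0 * n₂)) = 1 := by
      linarith
    have e2 : U 0 0 * m₂ + U 1 0 * m₁ - B * (U 1 0 * m₂) +
        (V 0 0 * n₂ + V 1 0 * n₁ - B * (V 1 0 * n₂)) = 0 := by linarith
    have e1' := congrArg (fun z : ℤ => (z : R)) e1
    have e2' := congrArg (fun z : ℤ => (z : R)) e2
    push_cast at e1' e2' ⊢
    linear_combination e1' + q * e2'
end

section
/- For all integers B, C, m₁, m₂, n₁, n₂, the matrix representations B_m = [[m₁, −C·m₂], [m₂, m₁ − B·m₂]] and B_n = [[n₁, −C·n₂], [n₂, n₁ − B·n₂]] are left coprime if and only if they are right coprime; that is, there exist 2×2 integer matrices U, V with B_m·U + B_n·V = I if and only if there exist 2×2 integer matrices U′, V′ with U′·B_m + V′·B_n = I. -/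
/-- Matrix representations of quadratic integers are left coprime if and only if
they are right coprime. -/
theorem left_coprime_iff_right_coprime (B C m₁ m₂ n₁ n₂ : ℤ) :
    (∃ U V : Matrix (Fin 2) (Fin 2) ℤ,
      !![m₁, -C * m₂; m₂, m₁ - B * m₂] * U + !![n₁, -C * n₂; n₂, n₁ - B * n₂] * V = 1) ↔
    (∃ U' V' : Matrix (Fin 2) (Fin 2) ℤ,
      U' * !![m₁, -C * m₂; m₂, m₁ - B * m₂] + V' * !![n₁, -C * n₂; n₂, n₁ - B * n₂] = 1) := by
  set Q : Matrix (Fin 2) (Fin 2) ℤ := !![B, 1; 1, 0] with hQ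
  set Qi : Matrix (Fin 2) (Fin 2) ℤ := !![0, 1; 1, -B] with hQi
  have hQQi : Q * Qi = 1 := by
    simp [hQ, hQi, Matrix.mul_fin_two, Matrix.one_fin_two]
  have hQiQ : Qi * Q = 1 := by
    simp [hQ, hQi, Matrix.mul_fin_two, Matrix.one_fin_two]
  -- conjugation lemma: Q * (B_a).transpose = B_a * Q
  have key : ∀ a₁ a₂ : ℤ,
      Q * (!![a₁, -C * a₂; a₂, a₁ - B * a₂] : Matrix (Fin 2) (Fin 2) ℤ).transpose
        = !![a₁, -C * a₂; a₂, a₁ - B * a₂] * Q := by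
    intro a₁ a₂
    ext i j
    fin_cases i <;> fin_cases j <;>
      simp [hQ, Matrix.mul_apply, Fin.sum_univ_two, Matrix.transpose_apply, Matrix.vecHead, Matrix.vecTail] <;> ring
  have key2 : ∀ a₁ a₂ : ℤ,
      (!![a₁, -C * a₂; a₂, a₁ - B * a₂] : Matrix (Fin 2) (Fin 2) ℤ).transpose * Qi
        = Qi * !![a₁, -C * a₂; a₂, a₁ - B * a₂] := by
    intro a₁ a₂
    ext i j
    fin_cases i <;> fin_cases j <;>
      simp [hQi, Matrix.mul_apply, Fin.sum_univ_two, Matrix.transpose_apply, Matrix.vecHead,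
        Matrix.vecTail] <;> ring
  constructor
  · rintro ⟨U, V, h⟩
    refine ⟨Q * U.transpose * Qi, Q * V.transpose * Qi, ?_⟩
    have hT := congrArg Matrix.transpose h
    simp only [Matrix.transpose_add, Matrix.transpose_mul, Matrix.transpose_one] at hT
    have : Q * (U.transpose * !![m₁, -C * m₂; m₂, m₁ - B * m₂].transpose
        + V.transpose * !![n₁, -C * n₂; n₂, n₁ - B * n₂].transpose) * Qi = Q * 1 * Qi := by rw [hT]
    rw [Matrix.mul_one, hQQi] at this
    rw [← this]
    rw [Matrix.mul_add, Matrix.add_mul]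
    congr 1 <;> simp only [Matrix.mul_assoc, ← key2]
  · rintro ⟨U', V', h⟩
    refine ⟨Q * U'.transpose * Qi, Q * V'.transpose * Qi, ?_⟩
    have hT := congrArg Matrix.transpose h
    simp only [Matrix.transpose_add, Matrix.transpose_mul, Matrix.transpose_one] at hT
    have : Q * (!![m₁, -C * m₂; m₂, m₁ - B * m₂].transpose * U'.transpose
        + !![n₁, -C * n₂; n₂, n₁ - B * n₂].transpose * V'.transpose) * Qi = Q * 1 * Qi := by rw [hT]
    rw [Matrix.mul_one, hQQi] at this
    rw [← this]
    rw [Matrix.mul_add, Matrix.add_mul]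
    congr 1 <;> simp only [← Matrix.mul_assoc, key]
end

section
/- Let C be an integer such that 1 − 4C is squarefree, and set B = −1. For integers m₁, m₂, the matrix B_m = [[m₁, −C·m₂], [m₂, m₁ + m₂]] and its adjugate B_m̂ = [[m₁ + m₂, C·m₂], [−m₂, m₁]] are left coprime if and only if gcd(m₁, m₂) = 1 and gcd(2m₁ + m₂, 4C − 1) = 1. -/
/-- For `B = −1` (so the minimal polynomial is `X² − X + C` with `1 − 4C`
squarefree), the matrix `B_m` and its adjugate `B_m̂` are left coprime if and only if
`gcd(m₁, m₂) = 1` and `gcd(2m₁ + m₂, 4C − 1) = 1`. -/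
theorem adjugate_pair_left_coprime_iff_B_neg_one (C : ℤ) (hsf : Squarefree (1 - 4 * C))
    (m₁ m₂ : ℤ) :
    (∃ U V : Matrix (Fin 2) (Fin 2) ℤ,
      !![m₁, -C * m₂; m₂, m₁ + m₂] * U + !![m₁ + m₂, C * m₂; -m₂, m₁] * V = 1) ↔
    (Int.gcd m₁ m₂ = 1 ∧ Int.gcd (2 * m₁ + m₂) (4 * C - 1) = 1) := by
  set M : Matrix (Fin 2) (Fin 2) ℤ := !![m₁, -C * m₂; m₂, m₁ + m₂] with hM
  set N : Matrix (Fin 2) (Fin 2) ℤ := !![m₁ + m₂, C * m₂; -m₂, m₁] with hN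
  set Q : ℤ := m₁ ^ 2 + m₁ * m₂ + C * m₂ ^ 2 with hQ
  set s : ℤ := 2 * m₁ + m₂ with hs
  have hMN : M * N = Q • (1 : Matrix (Fin 2) (Fin 2) ℤ) := by
    ext i j
    fin_cases i <;> fin_cases j <;>
      simp [hM, hN, Matrix.mul_apply, Fin.sum_univ_two, Matrix.one_apply] <;> ring
  have hadd : M + N = s • (1 : Matrix (Fin 2) (Fin 2) ℤ) := by
    ext i j
    fin_cases i <;> fin_cases j <;>
      simp [hM, hN, Matrix.one_apply] <;> ring
  constructor
  · rintro ⟨U, V, h⟩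
    constructor
    · -- gcd m₁ m₂ = 1
      have h00 := congrArg (fun X => X 0 0) h
      simp [hM, hN, Matrix.add_apply, Matrix.mul_apply, Matrix.vecMul, dotProduct,
        Fin.sum_univ_two, Matrix.one_apply] at h00
      have hcop : IsCoprime m₁ m₂ :=
        ⟨U 0 0 + V 0 0, V 0 0 + C * (V 1 0 - U 1 0), by linear_combination h00⟩
      exact Int.isCoprime_iff_gcd_eq_one.mp hcop
    · -- gcd s (4C-1) = 1
      have hg1 : (Int.gcd s (4 * C - 1) : ℤ) ∣ s := Int.gcd_dvd_left _ _
      have hg2 : (Int.gcd s (4 * C - 1) : ℤ) ∣ 4 * C - 1 := Int.gcd_dvd_right _ _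
      set g : ℤ := (Int.gcd s (4 * C - 1) : ℤ) with hg
      -- g divides Q
      have hg4Q : g ∣ 4 * Q := by
        have : 4 * Q = s * s + (4 * C - 1) * m₂ ^ 2 := by rw [hQ, hs]; ring
        rw [this]
        exact dvd_add (hg1.mul_right s) (hg2.mul_right _)
      have hgodd : ¬ (2 : ℤ) ∣ g := by
        intro h2
        have : (2 : ℤ) ∣ 4 * C - 1 := h2.trans hg2
        omega
      have hcop4 : IsCoprime g 4 := by
        obtain ⟨k, hk⟩ : ∃ k, g = 2 * k + 1 := by
          rcases Int.even_or_odd g with he | ho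
          · exact absurd he.two_dvd hgodd
          · exact ho
        exact ⟨g, -(k ^ 2 + k), by rw [hk]; ring⟩
      have hgQ : g ∣ Q := hcop4.dvd_of_dvd_mul_left hg4Q
      -- from h derive 1 = Q * W + s * k
      have hNV : N = s • (1 : Matrix (Fin 2) (Fin 2) ℤ) - M := by
        rw [← hadd]; abel
      have key : M * (U - V) = 1 - s • V := by
        rw [mul_sub]
        have : N * V = s • V - M * V := by rw [hNV, sub_mul, Matrix.smul_mul, Matrix.one_mul]
        rw [← h, this]
        abel
      have hdet := congrArg Matrix.det key
      rw [Matrix.det_mul] at hdet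
      have hdetM : M.det = Q := by
        rw [hM, Matrix.det_fin_two_of, hQ]; ring
      have hdetR : (1 - s • V).det =
          1 - s * (V 0 0 + V 1 1) + s ^ 2 * (V 0 0 * V 1 1 - V 0 1 * V 1 0) := by
        rw [Matrix.det_fin_two]
        simp only [Matrix.sub_apply, Matrix.smul_apply, Matrix.one_apply, smul_eq_mul]
        norm_num
        ring
      rw [hdetM, hdetR] at hdet
      have hdvd1 : g ∣ 1 := by
        have : (1 : ℤ) = Q * (U - V).det + s * ((V 0 0 + V 1 1) - s * (V 0 0 * V 1 1 - V 0 1 * V 1 0)) := by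
          linarith [hdet]
        rw [this]
        exact dvd_add (hgQ.mul_right _) (hg1.mul_right _)
      have hdvd1' : (Int.gcd s (4 * C - 1) : ℤ) ∣ 1 := hg ▸ hdvd1
      exact Nat.dvd_one.mp (by exact_mod_cast hdvd1')
  · rintro ⟨h1, h2⟩
    -- coprime s m₁
    have hc12 : IsCoprime m₁ m₂ := Int.isCoprime_iff_gcd_eq_one.mpr h1
    have hcs1 : IsCoprime s m₁ := by
      obtain ⟨a, b, hab⟩ := hc12
      exact ⟨b, a - 2 * b, by rw [hs]; linear_combination hab⟩
    have hcsD : IsCoprime s (4 * C - 1) := Int.isCoprime_iff_gcd_eq_one.mpr h2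
    have hcsQ : IsCoprime s Q := by
      have h3 : IsCoprime s ((4 * C - 1) * m₁ ^ 2) := hcsD.mul_right (hcs1.pow_right)
      have : Q = (4 * C - 1) * m₁ ^ 2 + s * (m₁ + C * s - 4 * C * m₁) := by
        rw [hQ, hs]; ring
      rw [this]
      exact h3.add_mul_left_right _
    obtain ⟨b, a, hab⟩ := hcsQ  -- b * s + a * Q = 1
    refine ⟨a • N + b • (1 : Matrix (Fin 2) (Fin 2) ℤ), b • (1 : Matrix (Fin 2) (Fin 2) ℤ), ?_⟩
    rw [mul_add, Matrix.mul_smul, hMN, Matrix.mul_smul, Matrix.mul_one, Matrix.mul_smul,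
      Matrix.mul_one]
    rw [smul_smul]
    have : b • M + b • N = b • (s • (1 : Matrix (Fin 2) (Fin 2) ℤ)) := by
      rw [← smul_add, hadd]
    calc (a * Q) • (1 : Matrix (Fin 2) (Fin 2) ℤ) + b • M + b • N
        = (a * Q) • (1 : Matrix (Fin 2) (Fin 2) ℤ) + (b * s) • (1 : Matrix (Fin 2) (Fin 2) ℤ) := by
          rw [add_assoc, this, smul_smul]
      _ = 1 := by rw [← add_smul]; rw [show a * Q + b * s = 1 from by linarith [hab]]; simp
end

section
/- Let C be an even integer such that −C is squarefree, and set B = 0. For integers m₁, m₂, the matrix B_m = [[m₁, −C·m₂], [m₂, m₁]] and its adjugate B_m̂ = [[m₁, C·m₂], [−m₂, m₁]] are left coprime if and only if gcd(m₁, m₂) = 1 and gcd(m₁, C) = 1. -/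
/-- For `B = 0` and `C` even with `−C` squarefree, the matrix `B_m` and its
adjugate `B_m̂` are left coprime if and only if `gcd(m₁, m₂) = 1` and `gcd(m₁, C) = 1`. -/
theorem adjugate_pair_left_coprime_iff_B_zero_C_even (C : ℤ) (hC : Even C)
    (hsf : Squarefree (-C)) (m₁ m₂ : ℤ) :
    (∃ U V : Matrix (Fin 2) (Fin 2) ℤ,
      !![m₁, -C * m₂; m₂, m₁] * U + !![m₁, C * m₂; -m₂, m₁] * V = 1) ↔
    (Int.gcd m₁ m₂ = 1 ∧ Int.gcd m₁ C = 1) := by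
  constructor
  · rintro ⟨U, V, h⟩
    have h00 := congrFun (congrFun h 0) 0
    simp only [Matrix.add_apply, Matrix.mul_apply, Fin.sum_univ_two, Matrix.cons_val',
      Matrix.cons_val_zero, Matrix.cons_val_one, Matrix.head_cons, Matrix.head_fin_const,
      Matrix.empty_val', Matrix.cons_val_fin_one, Matrix.one_apply_eq, Matrix.of_apply] at h00
    have hcop : IsCoprime m₁ (C * m₂) :=
      ⟨U 0 0 + V 0 0, V 1 0 - U 1 0, by linear_combination h00⟩
    exact ⟨Int.isCoprime_iff_gcd_eq_one.mp hcop.of_mul_right_right,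
      Int.isCoprime_iff_gcd_eq_one.mp hcop.of_mul_right_left⟩
  · rintro ⟨h1, h2⟩
    have h1' : IsCoprime m₁ m₂ := Int.isCoprime_iff_gcd_eq_one.mpr h1
    have h2' : IsCoprime m₁ C := Int.isCoprime_iff_gcd_eq_one.mpr h2
    have hm₁odd : Odd m₁ := by
      rcases Int.even_or_odd m₁ with he | ho
      · exfalso
        have hdvd : (2 : ℤ) ∣ (Int.gcd m₁ C : ℤ) := Int.dvd_coe_gcd he.two_dvd hC.two_dvd
        rw [h2] at hdvd
        norm_num at hdvd
      · exact ho
    have hdodd : Odd (m₁ ^ 2 + C * m₂ ^ 2) := by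
      exact (hm₁odd.pow).add_even (hC.mul_right _)
    have hcd2 : IsCoprime (m₁ ^ 2 + C * m₂ ^ 2) (2 : ℤ) :=
      ((Int.prime_two.coprime_iff_not_dvd).mpr
        (Int.two_dvd_ne_zero.mpr (Int.odd_iff.mp hdodd))).symm
    have hcdm : IsCoprime (m₁ ^ 2 + C * m₂ ^ 2) m₁ := by
      have hc : IsCoprime m₁ (C * m₂ ^ 2) := h2'.mul_right (h1'.pow_right)
      have heq : m₁ ^ 2 + C * m₂ ^ 2 = C * m₂ ^ 2 + m₁ * m₁ := by ring
      rw [heq]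
      exact (hc.add_mul_left_right m₁).symm
    obtain ⟨x, y, hxy⟩ := hcd2.mul_right hcdm
    refine ⟨!![x * m₁ + y, x * (C * m₂); -(x * m₂), x * m₁ + y], !![y, 0; 0, y], ?_⟩
    ext i j
    fin_cases i <;> fin_cases j <;>
      simp only [Matrix.add_apply, Matrix.mul_apply, Fin.sum_univ_two, Matrix.cons_val',
        Matrix.cons_val_zero, Matrix.cons_val_one, Matrix.head_cons, Matrix.head_fin_const,
        Matrix.empty_val', Matrix.cons_val_fin_one, Matrix.one_apply, Fin.zero_eta, Fin.mk_one,
        if_true, if_false, Fin.isValue, ite_true, ite_false, Matrix.of_apply] <;>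
      norm_num <;> linarith [hxy]
end

section
/- Let C be an odd integer such that −C is squarefree and −C ≢ 1 (mod 4), and set B = 0. For integers m₁, m₂, the matrix B_m = [[m₁, −C·m₂], [m₂, m₁]] and its adjugate B_m̂ = [[m₁, C·m₂], [−m₂, m₁]] are left coprime if and only if gcd(m₁ + m₂, m₁ − m₂) = 1 and gcd(m₁, C) = 1. -/
private lemma prime_not_dvd_one {p : ℕ} (hp : p.Prime) (h : (p:ℤ) ∣ 1) : False := by
  have h1 := Int.le_of_dvd one_pos h
  have h2 := hp.two_le
  omega

private lemma sq_sub_self_even (n : ℤ) : (2:ℤ) ∣ n^2 - n := by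
  have h := Int.even_mul_succ_self (n-1)
  have e : (n-1)*((n-1)+1) = n^2 - n := by ring
  rw [e] at h
  exact h.two_dvd

/-- For `B = 0` and `C` odd with `−C` squarefree and `−C ≢ 1 (mod 4)`, the matrix
`B_m` and its adjugate `B_m̂` are left coprime if and only if `gcd(m₁ + m₂, m₁ − m₂) = 1`
and `gcd(m₁, C) = 1`. -/
theorem adjugate_pair_left_coprime_iff_B_zero_C_odd (C : ℤ) (hC : Odd C)
    (hsf : Squarefree (-C)) (hmod : ¬ ((-C) % 4 = 1)) (m₁ m₂ : ℤ) :
    (∃ U V : Matrix (Fin 2) (Fin 2) ℤ,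
      !![m₁, -C * m₂; m₂, m₁] * U + !![m₁, C * m₂; -m₂, m₁] * V = 1) ↔
    (Int.gcd (m₁ + m₂) (m₁ - m₂) = 1 ∧ Int.gcd m₁ C = 1) := by
  obtain ⟨k, hk⟩ := hC
  constructor
  · rintro ⟨U, V, h⟩
    have E00 : m₁ * U 0 0 + (-C * m₂) * U 1 0 + m₁ * V 0 0 + (C * m₂) * V 1 0 = 1 := by
      have e := congrFun (congrFun h 0) 0
      simp [Matrix.mul_apply, Matrix.vecMul, dotProduct, Fin.sum_univ_two] at e
      linear_combination e
    have E10 : m₂ * U 0 0 + m₁ * U 1 0 + (-m₂) * V 0 0 + m₁ * V 1 0 = 0 := by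
      have e := congrFun (congrFun h 1) 0
      simp [Matrix.mul_apply, Matrix.vecMul, dotProduct, Fin.sum_univ_two] at e
      linear_combination e
    constructor
    · by_contra hg
      set p := (Int.gcd (m₁ + m₂) (m₁ - m₂)).minFac with hpdef
      have hp : p.Prime := Nat.minFac_prime hg
      have hps : (p:ℤ) ∣ m₁ + m₂ :=
        dvd_trans (Int.natCast_dvd_natCast.mpr (Nat.minFac_dvd _)) (Int.gcd_dvd_left _ _)
      have hpd : (p:ℤ) ∣ m₁ - m₂ :=
        dvd_trans (Int.natCast_dvd_natCast.mpr (Nat.minFac_dvd _)) (Int.gcd_dvd_right _ _)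
      rcases eq_or_ne p 2 with hp2 | hp2
      · rw [hp2] at hps hpd
        push_cast at hps hpd
        have key : (m₁ + m₂) * U 0 0 + (m₁ - C * m₂) * U 1 0
            + (m₁ - m₂) * V 0 0 + (m₁ + C * m₂) * V 1 0 = 1 := by
          linear_combination E00 + E10
        have d1 : (2:ℤ) ∣ m₁ - C * m₂ := by
          have e : m₁ - C * m₂ = (m₁ - m₂) - 2 * (k * m₂) := by rw [hk]; ring
          rw [e]; exact dvd_sub hpd ⟨k * m₂, rfl⟩
        have d2 : (2:ℤ) ∣ m₁ + C * m₂ := by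
          have e : m₁ + C * m₂ = (m₁ + m₂) + 2 * (k * m₂) := by rw [hk]; ring
          rw [e]; exact dvd_add hps ⟨k * m₂, rfl⟩
        have : (2:ℤ) ∣ 1 := by
          rw [← key]
          exact dvd_add (dvd_add (dvd_add (dvd_mul_of_dvd_left hps _)
            (dvd_mul_of_dvd_left d1 _)) (dvd_mul_of_dvd_left hpd _))
            (dvd_mul_of_dvd_left d2 _)
        norm_num at this
      · have hpZ : Prime (p:ℤ) := Nat.prime_iff_prime_int.mp hp
        have h2m1 : (p:ℤ) ∣ 2 * m₁ := by
          have e : 2 * m₁ = (m₁ + m₂) + (m₁ - m₂) := by ring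
          rw [e]; exact dvd_add hps hpd
        have h2m2 : (p:ℤ) ∣ 2 * m₂ := by
          have e : 2 * m₂ = (m₁ + m₂) - (m₁ - m₂) := by ring
          rw [e]; exact dvd_sub hps hpd
        have hnd2 : ¬ (p:ℤ) ∣ 2 := by
          intro hd
          have := Int.le_of_dvd two_pos hd
          have := hp.two_le
          omega
        have hm1 : (p:ℤ) ∣ m₁ := ((hpZ.dvd_mul.mp h2m1).resolve_left hnd2)
        have hm2 : (p:ℤ) ∣ m₂ := ((hpZ.dvd_mul.mp h2m2).resolve_left hnd2)
        have : (p:ℤ) ∣ 1 := by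
          rw [← E00]
          exact dvd_add (dvd_add (dvd_add (dvd_mul_of_dvd_left hm1 _)
            (dvd_mul_of_dvd_left (hm2.mul_left _) _)) (dvd_mul_of_dvd_left hm1 _))
            (dvd_mul_of_dvd_left (hm2.mul_left _) _)
        exact prime_not_dvd_one hp this
    · by_contra hg
      set p := (Int.gcd m₁ C).minFac with hpdef
      have hp : p.Prime := Nat.minFac_prime hg
      have hm1 : (p:ℤ) ∣ m₁ :=
        dvd_trans (Int.natCast_dvd_natCast.mpr (Nat.minFac_dvd _)) (Int.gcd_dvd_left _ _)
      have hmC : (p:ℤ) ∣ C :=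
        dvd_trans (Int.natCast_dvd_natCast.mpr (Nat.minFac_dvd _)) (Int.gcd_dvd_right _ _)
      have : (p:ℤ) ∣ 1 := by
        rw [← E00]
        exact dvd_add (dvd_add (dvd_add (dvd_mul_of_dvd_left hm1 _)
          (dvd_mul_of_dvd_left ((dvd_neg.mpr hmC).mul_right m₂) _)) (dvd_mul_of_dvd_left hm1 _))
          (dvd_mul_of_dvd_left (hmC.mul_right m₂) _)
      exact prime_not_dvd_one hp this
  · rintro ⟨h1, h2⟩
    have hg : Int.gcd (m₁ ^ 2 + C * m₂ ^ 2) (2 * m₁) = 1 := by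
      by_contra hg
      set p := (Int.gcd (m₁ ^ 2 + C * m₂ ^ 2) (2 * m₁)).minFac with hpdef
      have hp : p.Prime := Nat.minFac_prime hg
      have hpd : (p:ℤ) ∣ m₁ ^ 2 + C * m₂ ^ 2 :=
        dvd_trans (Int.natCast_dvd_natCast.mpr (Nat.minFac_dvd _)) (Int.gcd_dvd_left _ _)
      have hpm : (p:ℤ) ∣ 2 * m₁ :=
        dvd_trans (Int.natCast_dvd_natCast.mpr (Nat.minFac_dvd _)) (Int.gcd_dvd_right _ _)
      rcases eq_or_ne p 2 with hp2 | hp2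
      · rw [hp2] at hpd
        push_cast at hpd
        have ds : (2:ℤ) ∣ m₁ + m₂ := by
          have e : m₁ + m₂ = (m₁ ^ 2 + C * m₂ ^ 2) - (m₁ ^ 2 - m₁) - (m₂ ^ 2 - m₂)
              - 2 * (k * m₂ ^ 2) := by rw [hk]; ring
          rw [e]
          exact dvd_sub (dvd_sub (dvd_sub hpd (sq_sub_self_even m₁)) (sq_sub_self_even m₂))
            ⟨k * m₂ ^ 2, rfl⟩
        have dd : (2:ℤ) ∣ m₁ - m₂ := by
          have e : m₁ - m₂ = (m₁ + m₂) - 2 * m₂ := by ring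
          rw [e]; exact dvd_sub ds ⟨m₂, rfl⟩
        have : (2:ℤ) ∣ ((Int.gcd (m₁ + m₂) (m₁ - m₂) : ℕ) : ℤ) := Int.dvd_coe_gcd ds dd
        rw [h1] at this
        norm_num at this
      · have hpZ : Prime (p:ℤ) := Nat.prime_iff_prime_int.mp hp
        have hnd2 : ¬ (p:ℤ) ∣ 2 := by
          intro hd
          have := Int.le_of_dvd two_pos hd
          have := hp.two_le
          omega
        have hm1 : (p:ℤ) ∣ m₁ := (hpZ.dvd_mul.mp hpm).resolve_left hnd2
        have hCm : (p:ℤ) ∣ C * m₂ ^ 2 := by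
          have e : C * m₂ ^ 2 = (m₁ ^ 2 + C * m₂ ^ 2) - m₁ ^ 2 := by ring
          rw [e]; exact dvd_sub hpd (dvd_pow hm1 two_ne_zero)
        rcases hpZ.dvd_mul.mp hCm with hc | hm2sq
        · have : (p:ℤ) ∣ ((Int.gcd m₁ C : ℕ) : ℤ) := Int.dvd_coe_gcd hm1 hc
          rw [h2] at this
          exact prime_not_dvd_one hp (by exact_mod_cast this)
        · have hm2 : (p:ℤ) ∣ m₂ := hpZ.dvd_of_dvd_pow hm2sq
          have : (p:ℤ) ∣ ((Int.gcd (m₁ + m₂) (m₁ - m₂) : ℕ) : ℤ) :=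
            Int.dvd_coe_gcd (dvd_add hm1 hm2) (dvd_sub hm1 hm2)
          rw [h1] at this
          exact prime_not_dvd_one hp (by exact_mod_cast this)
    obtain ⟨a, b, hab⟩ := Int.isCoprime_iff_gcd_eq_one.mpr hg
    refine ⟨!![a * m₁ + b, a * (C * m₂); a * (-m₂), a * m₁ + b], !![b, 0; 0, b], ?_⟩
    ext i j
    fin_cases i <;> fin_cases j <;>
      simp [Matrix.mul_apply, Matrix.vecMul, dotProduct, Fin.sum_univ_two,
        Matrix.one_apply] <;>
      first
        | linear_combination hab
        | linear_combination (norm := ring1) (0 : ℤ)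
end

section
/- A Gaussian integer m and its conjugate star m are coprime if and only if gcd(m₁ + m₂, m₁ − m₂) = 1, where m₁ = Re(m) and m₂ = Im(m). That is, for every m ∈ ℤ[i], IsCoprime m (star m) holds if and only if the rational integers m.re + m.im and m.re − m.im are coprime in ℤ. -/
open Zsqrtd

/-- A Gaussian integer `m` and its conjugate `star m` are coprime if and only if
`m.re + m.im` and `m.re − m.im` are coprime in `ℤ`. -/
theorem gaussianInt_isCoprime_star_iff (m : GaussianInt) :
    IsCoprime m (star m) ↔ IsCoprime (m.re + m.im) (m.re - m.im) := by
  set a := m.re with ha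
  set b := m.im with hb
  set I : GaussianInt := ⟨0, 1⟩ with hI
  have hII : I * I = -1 := by ext <;> simp [hI, Zsqrtd.re_mul, Zsqrtd.im_mul]
  have hm : m = (a : GaussianInt) + (b : GaussianInt) * I := by
    ext <;> simp [hI, Zsqrtd.re_mul, Zsqrtd.im_mul, ha, hb]
  have hsm : star m = (a : GaussianInt) - (b : GaussianInt) * I := by
    ext <;> simp [hI, Zsqrtd.re_mul, Zsqrtd.im_mul, Zsqrtd.re_star, Zsqrtd.im_star, ha, hb]
  have h2eq : (1 - I) * (1 + I) = (2 : GaussianInt) := by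
    have : (1 - I) * (1 + I) = 1 - I * I := by ring
    rw [this, hII]; ring
  constructor
  · rintro ⟨x, y, hxy⟩
    rw [Int.isCoprime_iff_gcd_eq_one]
    set g : ℕ := Int.gcd (a + b) (a - b) with hg
    have hgs : (g : ℤ) ∣ a + b := Int.gcd_dvd_left _ _
    have hgd : (g : ℤ) ∣ a - b := Int.gcd_dvd_right _ _
    have hre1 : ((1 - I) * m).re = a + b := by
      simp [hI, Zsqrtd.re_mul, ha, hb]
    have him1 : ((1 - I) * m).im = -(a - b) := by
      simp [hI, Zsqrtd.im_mul, ha, hb]; ring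
    have hre2 : ((1 + I) * star m).re = a + b := by
      simp [hI, Zsqrtd.re_mul, Zsqrtd.re_star, Zsqrtd.im_star, ha, hb]
    have him2 : ((1 + I) * star m).im = a - b := by
      simp [hI, Zsqrtd.im_mul, Zsqrtd.re_star, Zsqrtd.im_star, ha, hb]; ring
    have h1 : ((g : ℤ) : GaussianInt) ∣ (1 - I) * m := by
      rw [Zsqrtd.intCast_dvd, hre1, him1]
      exact ⟨hgs, dvd_neg.mpr hgd⟩
    have h2 : ((g : ℤ) : GaussianInt) ∣ (1 + I) * star m := by
      rw [Zsqrtd.intCast_dvd, hre2, him2]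
      exact ⟨hgs, hgd⟩
    have h2' : ((g : ℤ) : GaussianInt) ∣ ((2 : ℤ) : GaussianInt) := by
      have key : (x * (1 + I)) * ((1 - I) * m) + (y * (1 - I)) * ((1 + I) * star m)
          = ((2 : ℤ) : GaussianInt) := by
        calc (x * (1 + I)) * ((1 - I) * m) + (y * (1 - I)) * ((1 + I) * star m)
            = ((1 - I) * (1 + I)) * (x * m + y * star m) := by ring
          _ = ((2 : ℤ) : GaussianInt) := by rw [h2eq, hxy, mul_one]; push_cast; ring
      rw [← key]
      exact dvd_add (Dvd.dvd.mul_left h1 _) (Dvd.dvd.mul_left h2 _)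
    have hg2 : (g : ℤ) ∣ 2 := (Zsqrtd.intCast_dvd_intCast (g : ℤ) 2).mp h2'
    have hg2' : g ∣ 2 := Int.ofNat_dvd.mp (by exact_mod_cast hg2)
    rcases (Nat.dvd_prime Nat.prime_two).mp hg2' with h1' | h2''
    · exact h1'
    · exfalso
      have hs2 : (2 : ℤ) ∣ a + b := by
        have := hgs; rw [h2''] at this; exact_mod_cast this
      have hd2 : (2 : ℤ) ∣ a - b := by
        have := hgd; rw [h2''] at this; exact_mod_cast this
      have hdvd1 : ((2 : ℤ) : GaussianInt) ∣ (1 - I) * m := by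
        rw [Zsqrtd.intCast_dvd, hre1, him1]
        exact ⟨hs2, dvd_neg.mpr hd2⟩
      have hdvd2 : ((2 : ℤ) : GaussianInt) ∣ (1 + I) * star m := by
        rw [Zsqrtd.intCast_dvd, hre2, him2]
        exact ⟨hs2, hd2⟩
      obtain ⟨w, hw⟩ := hdvd1
      obtain ⟨w', hw'⟩ := hdvd2
      have hne : (1 - I) ≠ (0 : GaussianInt) := by
        intro hc
        have := congrArg Zsqrtd.im hc
        simp [hI] at this
      have hne' : (1 + I) ≠ (0 : GaussianInt) := by
        intro hc
        have := congrArg Zsqrtd.im hc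
        simp [hI] at this
      have hmw : m = (1 + I) * w := by
        apply mul_left_cancel₀ hne
        rw [hw]
        have : ((2 : ℤ) : GaussianInt) = (1 - I) * (1 + I) := by rw [h2eq]; push_cast; ring
        rw [this]; ring
      have hsmw : star m = (1 + I) * (-(I * w')) := by
        apply mul_left_cancel₀ hne'
        rw [hw']
        have e1 : ((2 : ℤ) : GaussianInt) = (1 + I) * ((1 + I) * (-I)) := by
          linear_combination (norm := (push_cast; ring_nf)) (I + 2) * hII
        rw [e1]; ring
      have hunit : IsUnit (1 + I : GaussianInt) :=
        IsCoprime.isUnit_of_dvd' ⟨x, y, hxy⟩ ⟨w, hmw⟩ ⟨-(I * w'), hsmw⟩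
      have hn1 : ((1 + I : GaussianInt)).norm.natAbs = 1 := Zsqrtd.norm_eq_one_iff.mpr hunit
      have : ((1 + I : GaussianInt)).norm = 2 := by
        simp [Zsqrtd.norm, hI]
      rw [this] at hn1
      simp at hn1
  · intro h
    obtain ⟨u, v, huv⟩ := h
    have hsodd : ¬ (2 : ℤ) ∣ a + b := by
      intro h2s
      have h2d : (2 : ℤ) ∣ a - b := by
        have e : a - b = (a + b) - 2 * b := by ring
        rw [e]
        exact dvd_sub h2s ⟨b, rfl⟩
      have hcop : IsCoprime (a + b) (a - b) := ⟨u, v, huv⟩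
      have := IsCoprime.isUnit_of_dvd' hcop h2s h2d
      rw [Int.isUnit_iff] at this
      omega
    have hNodd : Odd (a * a + b * b) := by
      have ho : Odd (a + b) := Int.not_even_iff_odd.mp (fun he => hsodd he.two_dvd)
      have e1 : Even ((a - 1) * a) := by
        have := Int.even_mul_succ_self (a - 1)
        simpa using this
      have e2 : Even ((b - 1) * b) := by
        have := Int.even_mul_succ_self (b - 1)
        simpa using this
      have e : a * a + b * b = ((a - 1) * a + (b - 1) * b) + (a + b) := by ring
      rw [e]
      exact (e1.add e2).add_odd ho
    have hcop2N : IsCoprime (2 : ℤ) (a * a + b * b) := by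
      obtain ⟨k, hk⟩ := hNodd
      exact ⟨-k, 1, by rw [hk]; ring⟩
    have hcop2N' : IsCoprime ((2 : ℤ) : GaussianInt) ((a * a + b * b : ℤ) : GaussianInt) := by
      have := hcop2N.map (Int.castRingHom GaussianInt)
      simpa using this
    obtain ⟨α, β, hab⟩ := hcop2N'
    have hNeq : ((a * a + b * b : ℤ) : GaussianInt) = m * star m := by
      rw [hsm, hm]
      push_cast
      have : ((a : GaussianInt) + b * I) * ((a : GaussianInt) - b * I)
          = (a : GaussianInt) * a - (b * b) * (I * I) := by ring
      rw [this, hII]; ring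
    have key2 : ((u : GaussianInt) + v * I) * (1 - I) * m
        + ((u : GaussianInt) - v * I) * (1 + I) * star m = ((2 : ℤ) : GaussianInt) := by
      ext
      · simp only [Zsqrtd.re_mul, Zsqrtd.im_mul, Zsqrtd.re_add, Zsqrtd.im_add, Zsqrtd.re_sub,
          Zsqrtd.im_sub, Zsqrtd.re_one, Zsqrtd.im_one, Zsqrtd.re_intCast, Zsqrtd.im_intCast,
          Zsqrtd.re_star, Zsqrtd.im_star, hI, ← ha, ← hb]
        ring_nf
        linear_combination 2 * huv
      · simp only [Zsqrtd.re_mul, Zsqrtd.im_mul, Zsqrtd.re_add, Zsqrtd.im_add, Zsqrtd.re_sub,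
          Zsqrtd.im_sub, Zsqrtd.re_one, Zsqrtd.im_one, Zsqrtd.re_intCast, Zsqrtd.im_intCast,
          Zsqrtd.re_star, Zsqrtd.im_star, hI, ← ha, ← hb]
        ring
    exact ⟨α * (((u : GaussianInt) + v * I) * (1 - I)) + β * star m,
      α * (((u : GaussianInt) - v * I) * (1 + I)), by
        calc (α * (((u : GaussianInt) + v * I) * (1 - I)) + β * star m) * m
              + α * (((u : GaussianInt) - v * I) * (1 + I)) * star m
            = α * (((u : GaussianInt) + v * I) * (1 - I) * m
                + ((u : GaussianInt) - v * I) * (1 + I) * star m) + β * (m * star m) := by ring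
          _ = α * ((2 : ℤ) : GaussianInt) + β * ((a * a + b * b : ℤ) : GaussianInt) := by
              rw [key2, ← hNeq]
          _ = 1 := hab⟩
end

section
/- For integers m₁, m₂, the skew-circulant adjugate pair of 2×2 integer matrices B_m = [[m₁, −m₂], [m₂, m₁]] and B_m̂ = [[m₁, m₂], [−m₂, m₁]] are left coprime if and only if gcd(m₁ + m₂, m₁ − m₂) = 1. -/
/-- The skew-circulant adjugate pair `B_m = [[m₁, −m₂], [m₂, m₁]]` and
`B_m̂ = [[m₁, m₂], [−m₂, m₁]]` are left coprime iff `gcd(m₁ + m₂, m₁ − m₂) = 1`. -/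
theorem skew_circulant_adjugate_left_coprime_iff (m₁ m₂ : ℤ) :
    (∃ U V : Matrix (Fin 2) (Fin 2) ℤ,
      !![m₁, -m₂; m₂, m₁] * U + !![m₁, m₂; -m₂, m₁] * V = 1) ↔
    Int.gcd (m₁ + m₂) (m₁ - m₂) = 1 := by
  constructor
  · rintro ⟨U, V, h⟩
    rw [← Int.isCoprime_iff_gcd_eq_one]
    have h00 : (!![m₁, -m₂; m₂, m₁] * U + !![m₁, m₂; -m₂, m₁] * V) 0 0
        = (1 : Matrix (Fin 2) (Fin 2) ℤ) 0 0 := by rw [h]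
    have h10 : (!![m₁, -m₂; m₂, m₁] * U + !![m₁, m₂; -m₂, m₁] * V) 1 0
        = (1 : Matrix (Fin 2) (Fin 2) ℤ) 1 0 := by rw [h]
    simp [Matrix.mul_apply, Matrix.add_apply, Matrix.one_apply, Matrix.vecMul, dotProduct, Fin.sum_univ_two] at h00 h10
    exact ⟨U 0 0 + V 1 0, U 1 0 + V 0 0, by linear_combination h00 + h10⟩
  · intro hg
    have hco : IsCoprime (m₁ + m₂) (m₁ - m₂) := Int.isCoprime_iff_gcd_eq_one.mpr hg
    obtain ⟨x, y, hx⟩ := hco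
    -- m₁ + m₂ is odd
    have hodd : Odd (m₁ + m₂) := by
      rcases Int.even_or_odd (m₁ + m₂) with he | ho
      · exfalso
        obtain ⟨k, hk⟩ := he
        have h2 : (1 : ℤ) = 2 * (x * k + y * k - y * m₂) := by linear_combination -hx + (x + y) * hk
        omega
      · exact ho
    obtain ⟨k, hk⟩ := hodd
    -- Bezout for 2 and m₁² + m₂²
    set s : ℤ := m₁ * m₂ - 2 * k ^ 2 - 2 * k with hs_def
    have hs : 2 * s + (m₁ ^ 2 + m₂ ^ 2) = 1 := by
      linear_combination (m₁ + m₂ + 2 * k + 1) * hk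
    refine ⟨!![s * (x + y), -(s * (y - x)); s * (y - x), s * (x + y)],
            !![s * (x + y) + m₁, -(s * (x - y) + m₂); s * (x - y) + m₂, s * (x + y) + m₁], ?_⟩
    ext i j
    fin_cases i <;> fin_cases j <;>
      simp [Matrix.mul_apply, Matrix.add_apply, Matrix.one_apply, Matrix.vecMul,
        dotProduct, Fin.sum_univ_two] <;>
      first
      | ring1
      | linear_combination 2 * s * hx + hs
end

section
/- For integers m₁, m₂, the pair of 2×2 integer matrices B_m = [[m₁, −m₂], [m₂, m₁ + m₂]] and B_m̂ = [[m₁ + m₂, m₂], [−m₂, m₁]] are left coprime if and only if gcd(m₁, m₂) = 1 and 3 does not divide m₁ − m₂. -/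
/-- The pair `B_m = [[m₁, −m₂], [m₂, m₁ + m₂]]` and
`B_m̂ = [[m₁ + m₂, m₂], [−m₂, m₁]]` are left coprime iff `gcd(m₁, m₂) = 1` and
`3 ∤ m₁ − m₂`. -/
theorem eisenstein_adjugate_left_coprime_iff (m₁ m₂ : ℤ) :
    (∃ U V : Matrix (Fin 2) (Fin 2) ℤ,
      !![m₁, -m₂; m₂, m₁ + m₂] * U + !![m₁ + m₂, m₂; -m₂, m₁] * V = 1) ↔
    (Int.gcd m₁ m₂ = 1 ∧ ¬ ((3 : ℤ) ∣ m₁ - m₂)) := by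
  constructor
  · rintro ⟨U, V, h⟩
    have h00 := congrFun (congrFun h 0) 0
    have h10 := congrFun (congrFun h 1) 0
    simp [Matrix.vecMul, dotProduct, Matrix.mul_apply, Fin.sum_univ_two,
      Matrix.one_apply] at h00 h10
    constructor
    · rw [← Int.isCoprime_iff_gcd_eq_one]
      exact ⟨U 0 0 + V 0 0, -U 1 0 + V 0 0 + V 1 0, by linear_combination h00⟩
    · rintro ⟨k, hk⟩
      have hm : m₁ = 3 * k + m₂ := by linarith
      subst hm
      have h3 : (3:ℤ) * (k * U 0 0 - (k + m₂) * U 1 0 + (k + m₂) * V 0 0 - k * V 1 0) = 1 := by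
        linear_combination h00 - h10
      have : (3:ℤ) ∣ 1 := ⟨_, h3.symm⟩
      norm_num at this
  · rintro ⟨hg, h3⟩
    have hcop : IsCoprime m₁ m₂ := Int.isCoprime_iff_gcd_eq_one.mpr hg
    have c1 : IsCoprime m₁ (m₁ + m₂) := by
      have := hcop.add_mul_left_right 1
      rwa [mul_one, add_comm] at this
    have c2 : IsCoprime m₂ (m₁ + m₂) := by
      have := hcop.symm.add_mul_left_right 1
      rwa [mul_one] at this
    have cd2 : IsCoprime (m₁^2 + m₁*m₂ + m₂^2) (m₁ + m₂) := by
      have := ((c1.mul_left c2).neg_left.add_mul_left_left (m₁ + m₂))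
      have e : -(m₁ * m₂) + (m₁ + m₂) * (m₁ + m₂) = m₁^2 + m₁*m₂ + m₂^2 := by ring
      rwa [e] at this
    have c3 : IsCoprime (3:ℤ) (m₁ - m₂) :=
      (Int.prime_three.coprime_iff_not_dvd).mpr h3
    have c4 : IsCoprime m₁ (m₁ - m₂) := by
      have := hcop.neg_right.add_mul_left_right 1
      rwa [mul_one, neg_add_eq_sub] at this
    have c5 : IsCoprime m₂ (m₁ - m₂) := by
      have := hcop.symm.add_mul_left_right (-1)
      have e : m₁ + m₂ * (-1) = m₁ - m₂ := by ring
      rwa [e] at this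
    have cd1 : IsCoprime (m₁^2 + m₁*m₂ + m₂^2) (m₁ - m₂) := by
      have := ((c4.mul_left c5).mul_left c3).add_mul_left_left (m₁ - m₂)
      have e : m₁ * m₂ * 3 + (m₁ - m₂) * (m₁ - m₂) = m₁^2 + m₁*m₂ + m₂^2 := by ring
      rwa [e] at this
    obtain ⟨a, b, hab⟩ := cd1.mul_right cd2
    refine ⟨!![a*(m₁+m₂) + b*m₁, a*m₂ - b*m₂; -(a*m₂), a*m₁],
            !![0, 0; -(b*m₂), b*m₁], ?_⟩
    ext i j
    fin_cases i <;> fin_cases j <;>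
      simp [Matrix.mul_apply, Fin.sum_univ_two, Matrix.one_apply] <;>
      (first | ring1 | linear_combination hab)
end

section
/- Let p be a prime natural number and let m ∈ ℤ[i] satisfy (p : ℤ[i]) = m · star m and IsCoprime m (star m). Then the cross-difference coarray attains p² degrees of freedom: the map ℤ[i] × ℤ[i] → ℤ[i] ⧸ (span {(p : ℤ[i])}) sending (a, b) to the residue class of (star m)·a − m·b is surjective, and the quotient ring ℤ[i] ⧸ (span {(p : ℤ[i])}) has exactly p² elements (Nat.card = p²). -/
noncomputable def gaussLinearEquiv : GaussianInt ≃ₗ[ℤ] ℤ × ℤ where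
  toFun z := (z.re, z.im)
  invFun q := ⟨q.1, q.2⟩
  left_inv z := by ext <;> rfl
  right_inv q := rfl
  map_add' a b := rfl
  map_smul' n z := by
    have : n • z = (n : GaussianInt) * z := by
      rw [zsmul_eq_mul]
    simp [this, Zsqrtd.re_smul, Zsqrtd.im_smul, smul_eq_mul]

instance : Module.Free ℤ GaussianInt := Module.Free.of_equiv gaussLinearEquiv.symm

instance : Module.Finite ℤ GaussianInt := Module.Finite.equiv gaussLinearEquiv.symm

/-- If a prime `p` splits as `p = m · star m` in `ℤ[i]` with `m` and `star m`
coprime, then the cross-difference map `(a, b) ↦ (star m)·a − m·b` is surjective onto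
`ℤ[i] ⧸ (p)`, and this quotient has exactly `p²` elements. -/
theorem crt_array_dof_gaussian (p : ℕ) (hp : p.Prime) (m : GaussianInt)
    (hsplit : (p : GaussianInt) = m * star m) (hcop : IsCoprime m (star m)) :
    Function.Surjective (fun ab : GaussianInt × GaussianInt =>
      Ideal.Quotient.mk (Ideal.span {(p : GaussianInt)}) (star m * ab.1 - m * ab.2)) ∧
    Nat.card (GaussianInt ⧸ Ideal.span {(p : GaussianInt)}) = p ^ 2 := by
  constructor
  · intro y
    obtain ⟨x, rfl⟩ := Ideal.Quotient.mk_surjective y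
    obtain ⟨α, β, hab⟩ := hcop
    refine ⟨(β * x, -(α * x)), ?_⟩
    simp only
    congr 1
    linear_combination x * hab
  · have h1 : Ideal.absNorm (Ideal.span {(p : GaussianInt)}) = p ^ 2 := by
      rw [Ideal.absNorm_span_singleton]
      have hfr : Module.finrank ℤ GaussianInt = 2 := by
        rw [gaussLinearEquiv.finrank_eq]
        simp
      have hn : Algebra.norm ℤ ((p : GaussianInt)) = (p : ℤ) ^ 2 := by
        have hb : (p : GaussianInt) = algebraMap ℤ GaussianInt (p : ℤ) := by simp
        let b : Module.Basis (Fin 2) ℤ GaussianInt :=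
          (Pi.basisFun ℤ (Fin 2)).map
            ((LinearEquiv.finTwoArrow ℤ ℤ).trans gaussLinearEquiv.symm)
        rw [hb, Algebra.norm_algebraMap_of_basis b]
        simp
      rw [hn]
      simp [sq, Int.natAbs_mul]
    rw [← h1]
    rfl
end

section
/- Let p be a prime natural number and let m ∈ ℤ[i] satisfy (p : ℤ[i]) = m · star m and IsCoprime m (star m). Let π : ℤ[i] → ℤ[i] ⧸ (span {(p : ℤ[i])}) be the quotient map, and let S₁ = π''(span {m}) and S₂ = π''(span {star m}) be the images of the two principal ideals in the quotient. Then S₁ ∩ S₂ = {0}, each of S₁ and S₂ has exactly p elements, and their union S₁ ∪ S₂ has exactly 2p − 1 elements. -/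
noncomputable def giBasis : Module.Basis (Fin 2) ℤ GaussianInt :=
  Module.Basis.ofEquivFun
    { toFun := fun z => ![z.re, z.im]
      invFun := fun f => ⟨f 0, f 1⟩
      left_inv := fun z => by ext <;> simp
      right_inv := fun f => by
        ext i
        fin_cases i <;> simp
      map_add' := fun z w => by
        ext i
        fin_cases i <;> simp [Zsqrtd.re_add, Zsqrtd.im_add]
      map_smul' := fun c z => by
        ext i
        fin_cases i <;> simp [zsmul_eq_mul, Zsqrtd.re_smul, Zsqrtd.im_smul] }

instance inst_s13 : Module.Free ℤ GaussianInt := Module.Free.of_basis giBasis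
instance inst_s13_2 : Module.Finite ℤ GaussianInt := Module.Finite.of_basis giBasis

lemma card_image_span {R : Type*} [CommRing R] [IsDomain R] (m n : R) (hm : m ≠ 0) :
    Nat.card ((Ideal.Quotient.mk (Ideal.span {m * n})) ''
      ((Ideal.span {m} : Ideal R) : Set R)) = Nat.card (R ⧸ Ideal.span {n}) := by
  have hle : (Ideal.span {n} : Submodule R R) ≤
      Submodule.comap (m • (LinearMap.id : R →ₗ[R] R)) (Ideal.span {m * n}) := by
    intro x hx
    rw [Ideal.mem_span_singleton] at hx
    simp only [Submodule.mem_comap, LinearMap.smul_apply, LinearMap.id_apply, smul_eq_mul,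
      Ideal.mem_span_singleton, SetLike.mem_coe]
    exact mul_dvd_mul_left m hx
  set F := Submodule.mapQ (Ideal.span {n}) (Ideal.span {m * n})
    (m • (LinearMap.id : R →ₗ[R] R)) hle with hF
  have hFmk : ∀ c : R, F (Ideal.Quotient.mk (Ideal.span {n}) c) =
      Ideal.Quotient.mk (Ideal.span {m * n}) (m * c) := fun c => by
    show Submodule.mapQ _ _ _ hle (Submodule.Quotient.mk c) = _
    rw [Submodule.mapQ_apply]
    simp [smul_eq_mul]
  symm
  apply Nat.card_congr
  refine Equiv.ofBijective (fun x => ⟨F x, ?_⟩) ⟨?_, ?_⟩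
  · obtain ⟨c, rfl⟩ := Ideal.Quotient.mk_surjective x
    exact ⟨m * c, Ideal.mem_span_singleton.2 ⟨c, rfl⟩, (hFmk c).symm⟩
  · intro x y hxy
    obtain ⟨a, rfl⟩ := Ideal.Quotient.mk_surjective x
    obtain ⟨b, rfl⟩ := Ideal.Quotient.mk_surjective y
    have : F (Ideal.Quotient.mk _ a) = F (Ideal.Quotient.mk _ b) := by
      simpa using congrArg Subtype.val hxy
    rw [hFmk, hFmk, Ideal.Quotient.eq, ← mul_sub, Ideal.mem_span_singleton] at this
    rw [Ideal.Quotient.eq, Ideal.mem_span_singleton]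
    exact (mul_dvd_mul_iff_left hm).1 this
  · rintro ⟨y, a, ha, rfl⟩
    obtain ⟨c, rfl⟩ := Ideal.mem_span_singleton.1 ha
    exact ⟨Ideal.Quotient.mk _ c, Subtype.ext (hFmk c)⟩

/-- If a prime `p` splits as `p = m · star m` in `ℤ[i]` with `m` and `star m`
coprime, and `π : ℤ[i] → ℤ[i]⧸(p)` is the quotient map, then the images `S₁ = π''(m)` and
`S₂ = π''(star m)` of the two principal ideals intersect only in `0`, each has `p` elements,
and their union has `2p − 1` elements. -/
theorem crt_array_sensor_count_gaussian (p : ℕ) (hp : p.Prime) (m : GaussianInt)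
    (hsplit : (p : GaussianInt) = m * star m) (hcop : IsCoprime m (star m)) :
    letI π := Ideal.Quotient.mk (Ideal.span {(p : GaussianInt)})
    letI S₁ := π '' ((Ideal.span {m} : Ideal GaussianInt) : Set GaussianInt)
    letI S₂ := π '' ((Ideal.span {star m} : Ideal GaussianInt) : Set GaussianInt)
    S₁ ∩ S₂ = {0} ∧ Nat.card S₁ = p ∧ Nat.card S₂ = p ∧ Nat.card (S₁ ∪ S₂ : Set _) = 2 * p - 1 := by
  set π := Ideal.Quotient.mk (Ideal.span {(p : GaussianInt)}) with hπ
  set S₁ := π '' ((Ideal.span {m} : Ideal GaussianInt) : Set GaussianInt) with hS₁def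
  set S₂ := π '' ((Ideal.span {star m} : Ideal GaussianInt) : Set GaussianInt) with hS₂def
  have hp0 : (p : GaussianInt) ≠ 0 := by
    exact_mod_cast Nat.cast_ne_zero.2 hp.ne_zero
  have hm0 : m ≠ 0 := by rintro rfl; simp at hsplit; exact hp0 (by simpa using hsplit)
  have hsm0 : star m ≠ 0 := star_ne_zero.2 hm0
  -- intersection
  have hinter : S₁ ∩ S₂ = {0} := by
    ext x
    constructor
    · rintro ⟨⟨a, ha, rfl⟩, ⟨b, hb, hab⟩⟩
      have hab' : a - b ∈ Ideal.span {(p : GaussianInt)} := (Ideal.Quotient.eq).1 hab.symm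
      have hdvd : star m ∣ a := by
        have h1 : star m ∣ a - b := by
          have := Ideal.mem_span_singleton.1 hab'
          rw [hsplit] at this
          exact (dvd_mul_left _ _).trans this
        have h2 : star m ∣ b := Ideal.mem_span_singleton.1 hb
        simpa using dvd_add h1 h2
      have hma : m ∣ a := Ideal.mem_span_singleton.1 ha
      have : (p : GaussianInt) ∣ a := by rw [hsplit]; exact hcop.mul_dvd hma hdvd
      rw [Set.mem_singleton_iff]
      exact Ideal.Quotient.eq_zero_iff_mem.2 (Ideal.mem_span_singleton.2 this)
    · rintro rfl
      exact ⟨⟨0, (Ideal.span {m}).zero_mem, map_zero π⟩,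
        ⟨0, (Ideal.span {star m}).zero_mem, map_zero π⟩⟩
  -- cardinalities of quotients
  have hNN : Ideal.absNorm (Ideal.span {m}) * Ideal.absNorm (Ideal.span {star m}) = p ^ 2 := by
    rw [← map_mul, Ideal.span_singleton_mul_span_singleton, ← hsplit,
      Ideal.absNorm_span_singleton]
    have : (p : GaussianInt) = algebraMap ℤ GaussianInt (p : ℤ) := by simp
    rw [this, Algebra.norm_algebraMap_of_basis giBasis]
    simp [Int.natAbs_pow]
  have hNeq : Ideal.absNorm (Ideal.span {m}) = Ideal.absNorm (Ideal.span {star m}) := by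
    have e : (GaussianInt ⧸ Ideal.span {m}) ≃+* GaussianInt ⧸ Ideal.span {star m} :=
      Ideal.quotientEquiv _ _ (starRingAut : GaussianInt ≃+* GaussianInt)
        (by rw [Ideal.map_span]; simp)
    simp only [Ideal.absNorm_apply, Submodule.cardQuot_apply]
    exact Nat.card_congr e.toEquiv
  have hNm : Ideal.absNorm (Ideal.span {m}) = p := by
    have : Ideal.absNorm (Ideal.span {m}) ^ 2 = p ^ 2 := by
      rw [sq]; nth_rewrite 2 [hNeq]; exact hNN
    exact Nat.pow_left_injective (by norm_num) this
  have hNsm : Ideal.absNorm (Ideal.span {star m}) = p := hNeq ▸ hNm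
  have hq1 : Nat.card (GaussianInt ⧸ Ideal.span {m}) = p := by
    rw [← Submodule.cardQuot_apply, ← Ideal.absNorm_apply]; exact hNm
  have hq2 : Nat.card (GaussianInt ⧸ Ideal.span {star m}) = p := by
    rw [← Submodule.cardQuot_apply, ← Ideal.absNorm_apply]; exact hNsm
  -- cards of S₁ S₂
  have hS1 : Nat.card S₁ = p := by
    have h := card_image_span m (star m) hm0
    rw [← hsplit] at h
    exact h.trans hq2
  have hS2 : Nat.card S₂ = p := by
    have h := card_image_span (star m) m hsm0
    rw [mul_comm, ← hsplit] at h
    exact h.trans hq1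
  refine ⟨hinter, hS1, hS2, ?_⟩
  have hfin1 : S₁.Finite := by
    rw [← Set.finite_coe_iff]
    exact Nat.finite_of_card_ne_zero (by rw [hS1]; exact hp.ne_zero)
  have hfin2 : S₂.Finite := by
    rw [← Set.finite_coe_iff]
    exact Nat.finite_of_card_ne_zero (by rw [hS2]; exact hp.ne_zero)
  have key := Set.ncard_union_add_ncard_inter S₁ S₂ hfin1 hfin2
  rw [hinter] at key
  have h1 : S₁.ncard = p := by rw [← Nat.card_coe_set_eq]; exact hS1
  have h2 : S₂.ncard = p := by rw [← Nat.card_coe_set_eq]; exact hS2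
  rw [Nat.card_coe_set_eq]
  have hz : ({0} : Set (GaussianInt ⧸ Ideal.span {(p : GaussianInt)})).ncard = 1 :=
    Set.ncard_singleton 0
  rw [h1, h2, hz] at key
  have := hp.two_le
  omega
end

section
/- Let p be a prime natural number and let m ∈ ℤ[i] satisfy (p : ℤ[i]) = m · star m and IsCoprime m (star m). Then for every d ∈ ℤ[i] lying in the closed Voronoi cell of the lattice p·ℤ[i] (i.e., |d| ≤ |d − p·λ| for all λ ∈ ℤ[i]), there exist x₁, x₂ ∈ ℤ[i] such that x₁ lies in the closed Voronoi cell of the lattice 2m·ℤ[i] (i.e., |x₁| ≤ |x₁ − 2m·λ| for all λ ∈ ℤ[i]), x₂ lies in the closed Voronoi cell of the lattice (star m)·ℤ[i] (i.e., |x₂| ≤ |x₂ − (star m)·λ| for all λ ∈ ℤ[i]), and d = (star m)·x₁ − m·x₂. -/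
set_option maxHeartbeats 1000000
open GaussianInt Complex


/-- `x` lies in the closed Voronoi cell of the lattice `g·ℤ[i]`: the complex absolute value of
`x` is at most its distance (under the canonical embedding `ℤ[i] ↪ ℂ`) to every lattice point
`g·λ`. -/
def InVoronoiCell (g x : GaussianInt) : Prop :=
  ∀ lam : GaussianInt,
    ‖GaussianInt.toComplex x‖ ≤ ‖GaussianInt.toComplex (x - g * lam)‖

private lemma toComplex_re' (x : GaussianInt) : (toComplex x).re = (x.re : ℝ) := by
  rw [toComplex_def]; simp

private lemma toComplex_im' (x : GaussianInt) : (toComplex x).im = (x.im : ℝ) := by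
  rw [toComplex_def]; simp

private lemma abs_int_le_sq (a : ℤ) : (|a| : ℤ) ≤ a ^ 2 := by
  rcases eq_or_ne a 0 with h | h
  · simp [h]
  · have h1 : 1 ≤ |a| := Int.one_le_abs (by omega)
    nlinarith [abs_nonneg a, _root_.sq_abs a]

private lemma two_mul_le (a x : ℝ) (ha : |a| ≤ a ^ 2) (hx : |x| ≤ 1 / 2) :
    2 * a * x ≤ a ^ 2 := by
  calc 2 * a * x ≤ |2 * a * x| := le_abs_self _
    _ = 2 * |a| * |x| := by rw [abs_mul, abs_mul]; norm_num
    _ ≤ 2 * |a| * (1 / 2) := mul_le_mul_of_nonneg_left hx (by positivity)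
    _ = |a| := by ring
    _ ≤ a ^ 2 := ha

private lemma inS_voronoi (z : ℂ) (h1 : |z.re| ≤ 1/2) (h2 : |z.im| ≤ 1/2) (lam : GaussianInt) :
    ‖z‖ ≤ ‖z - toComplex lam‖ := by
  rw [Complex.norm_def, Complex.norm_def]
  apply Real.sqrt_le_sqrt
  have ha : |(lam.re : ℝ)| ≤ (lam.re : ℝ) ^ 2 := by exact_mod_cast abs_int_le_sq lam.re
  have hb : |(lam.im : ℝ)| ≤ (lam.im : ℝ) ^ 2 := by exact_mod_cast abs_int_le_sq lam.im
  have k1 := two_mul_le _ _ ha h1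
  have k2 := two_mul_le _ _ hb h2
  simp only [Complex.normSq_apply, Complex.sub_re, Complex.sub_im, toComplex_re', toComplex_im']
  nlinarith [k1, k2]

private lemma voronoi_of_inS (g x : GaussianInt) (hg : toComplex g ≠ 0)
    (h1 : |(toComplex x / toComplex g).re| ≤ 1/2)
    (h2 : |(toComplex x / toComplex g).im| ≤ 1/2) :
    InVoronoiCell g x := by
  intro lam
  have key := inS_voronoi _ h1 h2 lam
  have h3 : toComplex (x - g * lam) = toComplex g * (toComplex x / toComplex g - toComplex lam) := by
    rw [map_sub, map_mul]; field_simp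
  have h4 : ‖toComplex x‖ = ‖toComplex g‖ * ‖toComplex x / toComplex g‖ := by
    rw [← norm_mul]; congr 1; field_simp
  rw [h3, norm_mul, h4]
  exact mul_le_mul_of_nonneg_left key (norm_nonneg _)

/-- If a prime `p` splits as `p = m · star m` in `ℤ[i]` with `m` and `star m`
coprime, then every `d` in the closed Voronoi cell of `p·ℤ[i]` can be written as
`d = (star m)·x₁ − m·x₂` with `x₁` in the closed Voronoi cell of `2m·ℤ[i]` and `x₂` in the
closed Voronoi cell of `(star m)·ℤ[i]`. -/
theorem hole_free_symmetric_crt_gaussian (p : ℕ) (hp : p.Prime) (m : GaussianInt)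
    (hsplit : (p : GaussianInt) = m * star m) (hcop : IsCoprime m (star m)) :
    ∀ d : GaussianInt, InVoronoiCell (p : GaussianInt) d →
      ∃ x₁ x₂ : GaussianInt, InVoronoiCell (2 * m) x₁ ∧ InVoronoiCell (star m) x₂ ∧
        d = star m * x₁ - m * x₂ := by
  intro d hd
  obtain ⟨α, β, hαβ⟩ := hcop
  have hPC : toComplex m * toComplex (star m) = (p : ℂ) := by
    have h := congrArg toComplex hsplit
    rw [map_mul] at h
    rw [← h, map_natCast]
  have hp0 : (p : ℂ) ≠ 0 := Nat.cast_ne_zero.mpr hp.pos.ne'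
  have hM0 : toComplex m ≠ 0 := fun h => hp0 (by rw [← hPC, h, zero_mul])
  have hMb0 : toComplex (star m) ≠ 0 := fun h => hp0 (by rw [← hPC, h, mul_zero])
  have h2M0 : toComplex (2 * m) ≠ 0 := by
    rw [map_mul]
    exact mul_ne_zero (by rw [map_ofNat]; norm_num) hM0
  have hPpos : (0:ℝ) < p := by exact_mod_cast hp.pos
  set y : GaussianInt := -(d * α) * m with hy
  set q : GaussianInt := ⟨round ((y.re : ℚ)/(p:ℚ)), round ((y.im : ℚ)/(p:ℚ))⟩ with hq
  set x₁ : GaussianInt := d * β - m * q with hx1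
  set x₂ : GaussianInt := -(d * α) - star m * q with hx2
  have heq : d = star m * x₁ - m * x₂ := by
    rw [hx1, hx2]; linear_combination (-d) * hαβ
  -- x₂ / star m = y / p - q
  have hkey : toComplex x₂ * toComplex m = toComplex y - toComplex q * (p:ℂ) := by
    rw [hx2, hy, map_sub, map_mul, map_mul, map_neg, map_mul]
    linear_combination (-(toComplex q)) * hPC
  have hv : toComplex x₂ / toComplex (star m) = toComplex y / (p:ℂ) - toComplex q := by
    have step : toComplex x₂ / toComplex (star m)
        = (toComplex x₂ * toComplex m) / ((p:ℂ)) := by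
      rw [← hPC, mul_comm (toComplex m)]
      exact (mul_div_mul_right _ _ hM0).symm
    rw [step, hkey, sub_div, mul_div_assoc, div_self hp0, mul_one]
  have hyre : (toComplex y / (p:ℂ)).re = (y.re:ℝ)/(p:ℝ) := by
    rw [← ofReal_natCast, Complex.div_ofReal_re, toComplex_re']
  have hyim : (toComplex y / (p:ℂ)).im = (y.im:ℝ)/(p:ℝ) := by
    rw [← ofReal_natCast, Complex.div_ofReal_im, toComplex_im']
  have hv1 : |(toComplex x₂ / toComplex (star m)).re| ≤ 1/2 := by
    rw [hv, Complex.sub_re, hyre, toComplex_re']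
    have h := abs_sub_round ((y.re:ℚ)/(p:ℚ))
    have hqre : (q.re : ℝ) = ((round ((y.re : ℚ)/(p:ℚ)) : ℤ) : ℝ) := by rw [hq]
    rw [hqre, show (1/2:ℝ) = ((1/2:ℚ):ℝ) by norm_num]
    exact_mod_cast h
  have hv2 : |(toComplex x₂ / toComplex (star m)).im| ≤ 1/2 := by
    rw [hv, Complex.sub_im, hyim, toComplex_im']
    have h := abs_sub_round ((y.im:ℚ)/(p:ℚ))
    have hqim : (q.im : ℝ) = ((round ((y.im : ℚ)/(p:ℚ)) : ℤ) : ℝ) := by rw [hq]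
    rw [hqim, show (1/2:ℝ) = ((1/2:ℚ):ℝ) by norm_num]
    exact_mod_cast h
  -- d / p in the unit cell
  have hsq : ∀ lam : GaussianInt,
      normSq (toComplex d) ≤ normSq (toComplex d - (p:ℂ) * toComplex lam) := by
    intro lam
    have h1 := hd lam
    have h2 : toComplex (d - (p:GaussianInt) * lam) = toComplex d - (p:ℂ) * toComplex lam := by
      rw [map_sub, map_mul, map_natCast]
    rw [h2] at h1
    rw [← Complex.sq_norm, ← Complex.sq_norm]
    exact pow_le_pow_left₀ (_root_.norm_nonneg _) h1 2
  have e1 := hsq 1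
  have e2 := hsq (-1)
  have e3 := hsq ⟨0, 1⟩
  have e4 := hsq ⟨0, -1⟩
  have t1 : toComplex (1 : GaussianInt) = 1 := map_one _
  have t2 : toComplex (-1 : GaussianInt) = -1 := by rw [map_neg, map_one]
  have t3 : toComplex (⟨0, 1⟩ : GaussianInt) = I := by rw [toComplex_def']; simp
  have t4 : toComplex (⟨0, -1⟩ : GaussianInt) = -I := by rw [toComplex_def']; simp
  rw [t1] at e1; rw [t2] at e2; rw [t3] at e3; rw [t4] at e4
  simp only [Complex.normSq_apply, Complex.sub_re, Complex.sub_im, Complex.mul_re,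
    Complex.mul_im, Complex.natCast_re, Complex.natCast_im, Complex.one_re, Complex.one_im,
    Complex.neg_re, Complex.neg_im, Complex.I_re, Complex.I_im, mul_zero, mul_one,
    zero_mul, one_mul, sub_zero, zero_sub, add_zero, zero_add, neg_neg, mul_neg,
    neg_zero] at e1 e2 e3 e4
  set a : ℝ := (toComplex d).re with hadef
  set b : ℝ := (toComplex d).im with hbdef
  have hwre : (toComplex d / (p:ℂ)).re = (toComplex d).re/(p:ℝ) := by
    rw [← ofReal_natCast, Complex.div_ofReal_re]
  have hwim : (toComplex d / (p:ℂ)).im = (toComplex d).im/(p:ℝ) := by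
    rw [← ofReal_natCast, Complex.div_ofReal_im]
  have hw1 : |(toComplex d / (p:ℂ)).re| ≤ 1/2 := by
    rw [hwre, abs_le]
    constructor
    · rw [neg_le, ← neg_div, div_le_iff₀ hPpos]; nlinarith only [e2, hPpos]
    · rw [div_le_iff₀ hPpos]; nlinarith only [e1, hPpos]
  have hw2 : |(toComplex d / (p:ℂ)).im| ≤ 1/2 := by
    rw [hwim, abs_le]
    constructor
    · rw [neg_le, ← neg_div, div_le_iff₀ hPpos]; nlinarith only [e4, hPpos]
    · rw [div_le_iff₀ hPpos]; nlinarith only [e3, hPpos]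
  -- x₁ / (2m) = (x₂/star m + d/p)/2
  have hCeq : toComplex d = toComplex (star m) * toComplex x₁ - toComplex m * toComplex x₂ := by
    have := congrArg toComplex heq
    rwa [map_sub, map_mul, map_mul] at this
  have hu : toComplex x₁ / toComplex (2 * m) =
      (toComplex x₂ / toComplex (star m) + toComplex d / (p:ℂ)) / 2 := by
    have h2ne : (2:ℂ) ≠ 0 := two_ne_zero
    rw [map_mul, map_ofNat, div_eq_div_iff (mul_ne_zero h2ne hM0) h2ne,
      div_add_div _ _ hMb0 hp0, div_mul_eq_mul_div, eq_div_iff (mul_ne_zero hMb0 hp0)]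
    linear_combination (-(2:ℂ)*(p:ℂ)) * hCeq + (-(2:ℂ)*toComplex d) * hPC
  have hu1 : |(toComplex x₁ / toComplex (2 * m)).re| ≤ 1/2 := by
    have h2 : ((toComplex x₂ / toComplex (star m) + toComplex d / (p:ℂ)) / 2).re
        = ((toComplex x₂ / toComplex (star m)).re + (toComplex d / (p:ℂ)).re)/2 := by
      rw [show ((2:ℂ)) = ((2:ℝ):ℂ) by norm_num, Complex.div_ofReal_re, Complex.add_re]
    rw [hu, h2]
    rw [abs_le] at hv1 hw1 ⊢
    constructor <;> [linarith [hv1.1, hw1.1]; linarith [hv1.2, hw1.2]]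
  have hu2 : |(toComplex x₁ / toComplex (2 * m)).im| ≤ 1/2 := by
    have h2 : ((toComplex x₂ / toComplex (star m) + toComplex d / (p:ℂ)) / 2).im
        = ((toComplex x₂ / toComplex (star m)).im + (toComplex d / (p:ℂ)).im)/2 := by
      rw [show ((2:ℂ)) = ((2:ℝ):ℂ) by norm_num, Complex.div_ofReal_im, Complex.add_im]
    rw [hu, h2]
    rw [abs_le] at hv2 hw2 ⊢
    constructor <;> [linarith [hv2.1, hw2.1]; linarith [hv2.2, hw2.2]]
  exact ⟨x₁, x₂, voronoi_of_inS _ _ h2M0 hu1 hu2, voronoi_of_inS _ _ hMb0 hv1 hv2, heq⟩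
end

section
/- Let p be a prime natural number and let m ∈ ℤ[i] satisfy (p : ℤ[i]) = m · star m and IsCoprime m (star m). Then every Gaussian integer d in the square 2·|Re(d)| ≤ p and 2·|Im(d)| ≤ p belongs to the contiguous cross-difference coarray: there exist x₁, x₂ ∈ ℤ[i] such that x₁ lies in the closed Voronoi cell of the lattice 2m·ℤ[i] (i.e., |x₁| ≤ |x₁ − 2m·λ| for all λ ∈ ℤ[i]), x₂ lies in the closed Voronoi cell of the lattice (star m)·ℤ[i] (i.e., |x₂| ≤ |x₂ − (star m)·λ| for all λ ∈ ℤ[i]), and d = (star m)·x₁ − m·x₂. -/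
private lemma coord_sq (q a n : ℤ) (h : 2 * |a| ≤ q) : a ^ 2 ≤ (a - q * n) ^ 2 := by
  have hq0 : 0 ≤ q := le_trans (by positivity) h
  have ha1 : a ≤ |a| := le_abs_self a
  have ha2 : -|a| ≤ a := neg_abs_le a
  rcases lt_trichotomy n 0 with hn | hn | hn
  · have hn' : n ≤ -1 := by omega
    have h1 : q * n ≤ -q := by nlinarith
    nlinarith [mul_nonneg (by linarith : (0:ℤ) ≤ -(q*n)) (by linarith : (0:ℤ) ≤ 2*a - q*n)]
  · simp [hn]
  · have hn' : 1 ≤ n := hn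
    have h1 : q ≤ q * n := by nlinarith
    nlinarith [mul_nonneg (by linarith : (0:ℤ) ≤ q*n) (by linarith : (0:ℤ) ≤ q*n - 2*a)]

private lemma inCell_of_bounds (q : ℤ) (z : GaussianInt) (h1 : 2 * |z.re| ≤ q)
    (h2 : 2 * |z.im| ≤ q) (lam : GaussianInt) :
    ‖GaussianInt.toComplex z‖ ≤
      ‖GaussianInt.toComplex (z - (q : GaussianInt) * lam)‖ := by
  have hre : (z - (q : GaussianInt) * lam).re = z.re - q * lam.re := by
    simp [Zsqrtd.re_sub, Zsqrtd.re_mul]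
  have him : (z - (q : GaussianInt) * lam).im = z.im - q * lam.im := by
    simp [Zsqrtd.im_sub, Zsqrtd.im_mul]
  have nz : ∀ w : GaussianInt, Complex.normSq (GaussianInt.toComplex w)
      = (w.re : ℝ) * w.re + (w.im : ℝ) * w.im := by
    intro w; rw [Complex.normSq_apply]; simp
  rw [Complex.norm_def, Complex.norm_def]
  apply Real.sqrt_le_sqrt
  rw [nz, nz, hre, him]
  have e1 : ((z.re : ℝ)) ^ 2 ≤ ((z.re - q * lam.re : ℤ) : ℝ) ^ 2 := by
    exact_mod_cast coord_sq q z.re lam.re h1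
  have e2 : ((z.im : ℝ)) ^ 2 ≤ ((z.im - q * lam.im : ℤ) : ℝ) ^ 2 := by
    exact_mod_cast coord_sq q z.im lam.im h2
  push_cast at e1 e2 ⊢
  nlinarith [e1, e2]

private lemma cell_of_mul (c g x : GaussianInt) (hc : c ≠ 0)
    (h : ∀ lam : GaussianInt,
      ‖GaussianInt.toComplex (c * x)‖ ≤
        ‖GaussianInt.toComplex (c * x - (c * g) * lam)‖) :
    InVoronoiCell g x := by
  intro lam
  have hpos : 0 < ‖GaussianInt.toComplex c‖ := by
    rw [norm_pos_iff]
    simpa using hc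
  have key := h lam
  rw [show c * x - (c * g) * lam = c * (x - g * lam) by ring] at key
  simp only [map_mul, norm_mul] at key
  exact le_of_mul_le_mul_left key hpos

private lemma exists_balanced (q t : ℤ) (hq : 0 < q) :
    ∃ b : ℤ, 2 * |b| ≤ q ∧ q ∣ t - b := by
  have h1 : 0 ≤ t % q := Int.emod_nonneg t hq.ne'
  have h2 : t % q < q := Int.emod_lt_of_pos t hq
  have hdm : q * (t / q) + t % q = t := Int.mul_ediv_add_emod t q
  by_cases hle : 2 * (t % q) ≤ q
  · exact ⟨t % q, by rw [abs_of_nonneg h1]; linarith, ⟨t / q, by linarith⟩⟩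
  · refine ⟨t % q - q, ?_, ⟨t / q + 1, by ring_nf; linarith⟩⟩
    rw [abs_of_nonpos (by linarith)]
    linarith

/-- If a prime `p` splits as `p = m · star m` in `ℤ[i]` with `m` and `star m`
coprime, then every Gaussian integer `d` with `2·|Re(d)| ≤ p` and `2·|Im(d)| ≤ p` belongs to
the contiguous cross-difference coarray: `d = (star m)·x₁ − m·x₂` with `x₁` in the closed
Voronoi cell of `2m·ℤ[i]` and `x₂` in the closed Voronoi cell of `(star m)·ℤ[i]`. -/
theorem contiguous_coarray_gaussian (p : ℕ) (hp : p.Prime) (m : GaussianInt)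
    (hsplit : (p : GaussianInt) = m * star m) (hcop : IsCoprime m (star m)) :
    ∀ d : GaussianInt, 2 * |d.re| ≤ (p : ℤ) → 2 * |d.im| ≤ (p : ℤ) →
      ∃ x₁ x₂ : GaussianInt, InVoronoiCell (2 * m) x₁ ∧ InVoronoiCell (star m) x₂ ∧
        d = star m * x₁ - m * x₂ := by
  intro d hre him
  obtain ⟨α, β, hab⟩ := hcop
  have hp0 : (0 : ℤ) < p := by exact_mod_cast hp.pos
  have hm0 : m ≠ 0 := by
    rintro rfl
    rw [star_zero, mul_zero] at hsplit
    have h := congrArg Zsqrtd.re hsplit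
    simp at h
    omega
  have hsm0 : star m ≠ 0 := star_ne_zero.mpr hm0
  set c : GaussianInt := β * star m * d with hc
  obtain ⟨b₁, hb₁, hd₁⟩ := exists_balanced (p : ℤ) (c.re - d.re) hp0
  obtain ⟨b₂, hb₂, hd₂⟩ := exists_balanced (p : ℤ) (c.im - d.im) hp0
  set y₂ : GaussianInt := ⟨b₁, b₂⟩ with hy₂
  set y₁ : GaussianInt := d + y₂ with hy₁
  have hcoe : ((p : ℤ) : GaussianInt) = (p : GaussianInt) := by push_cast; ring
  have hpdvd : ((p : ℤ) : GaussianInt) ∣ y₁ - c := by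
    rw [Zsqrtd.intCast_dvd]
    constructor
    · have h : (y₁ - c).re = -((c.re - d.re) - b₁) := by
        simp [hy₁, hy₂, Zsqrtd.re_sub, Zsqrtd.re_add]; ring
      rw [h]; exact dvd_neg.mpr hd₁
    · have h : (y₁ - c).im = -((c.im - d.im) - b₂) := by
        simp [hy₁, hy₂, Zsqrtd.im_sub, Zsqrtd.im_add]; ring
      rw [h]; exact dvd_neg.mpr hd₂
  have hsmp : star m ∣ ((p : ℤ) : GaussianInt) := by
    rw [hcoe, hsplit]; exact dvd_mul_left _ _
  have hmp : m ∣ ((p : ℤ) : GaussianInt) := by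
    rw [hcoe, hsplit]; exact dvd_mul_right _ _
  have h1 : star m ∣ y₁ := by
    have hc1 : star m ∣ c := ⟨β * d, by rw [hc]; ring⟩
    have : y₁ = c + (y₁ - c) := by ring
    rw [this]
    exact dvd_add hc1 (dvd_trans hsmp hpdvd)
  have h2 : m ∣ y₂ := by
    have hcd : m ∣ c - d := ⟨-(α * d), by rw [hc]; linear_combination d * hab⟩
    have : y₂ = (y₁ - c) + (c - d) := by rw [hy₁]; ring
    rw [this]
    exact dvd_add (dvd_trans hmp hpdvd) hcd
  obtain ⟨x₁, hx₁⟩ := h1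
  obtain ⟨x₂, hx₂⟩ := h2
  have hy₂re : y₂.re = b₁ := rfl
  have hy₂im : y₂.im = b₂ := rfl
  have hy₁re : y₁.re = d.re + b₁ := by simp [hy₁, hy₂, Zsqrtd.re_add]
  have hy₁im : y₁.im = d.im + b₂ := by simp [hy₁, hy₂, Zsqrtd.im_add]
  refine ⟨x₁, x₂, ?_, ?_, ?_⟩
  · apply cell_of_mul (star m) _ _ hsm0
    intro lam
    have key := inCell_of_bounds (2 * p) y₁ ?_ ?_ lam
    · rw [hx₁] at key
      have e : star m * x₁ - ((2 * (p : ℤ) : ℤ) : GaussianInt) * lam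
          = star m * x₁ - (star m * (2 * m)) * lam := by
        push_cast
        rw [hsplit]
        ring
      rwa [e] at key
    · rw [hy₁re]
      have := abs_add_le d.re b₁
      calc 2 * |d.re + b₁| ≤ 2 * (|d.re| + |b₁|) := by linarith
        _ ≤ 2 * (p : ℤ) := by linarith
    · rw [hy₁im]
      have := abs_add_le d.im b₂
      calc 2 * |d.im + b₂| ≤ 2 * (|d.im| + |b₂|) := by linarith
        _ ≤ 2 * (p : ℤ) := by linarith
  · apply cell_of_mul m _ _ hm0
    intro lam
    have key := inCell_of_bounds (p : ℤ) y₂ (by rw [hy₂re]; exact hb₁)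
      (by rw [hy₂im]; exact hb₂) lam
    rw [hx₂] at key
    have e : m * x₂ - (((p : ℤ) : ℤ) : GaussianInt) * lam
        = m * x₂ - (m * star m) * lam := by
      rw [hcoe, hsplit]
    rwa [e] at key
  · rw [← hx₁, ← hx₂, hy₁]
    ring
end

section
/- Let p be a prime natural number, let m₁, m₂ be integers, and in the ring of Eisenstein integers ℤ[ω] set m = m₁ + m₂·ω and m̂ = (m₁ + m₂) − m₂·ω. Assume m · m̂ = (p : ℤ[ω]) and IsCoprime m m̂. Then the map ℤ[ω] × ℤ[ω] → ℤ[ω] ⧸ (span {(p : ℤ[ω])}) sending (a, b) to the residue class of m̂·a − m·b is surjective, and the quotient ring ℤ[ω] ⧸ (span {(p : ℤ[ω])}) has exactly p² elements (Nat.card = p²). -/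
open Polynomial

/-- In the ring of Eisenstein integers `ℤ[ω] = ℤ[X]/(X² − X + 1)`, if a prime
`p` splits as `p = m · m̂` with `m = m₁ + m₂·ω` and `m̂ = (m₁ + m₂) − m₂·ω` coprime, then the
cross-difference map `(a, b) ↦ m̂·a − m·b` is surjective onto `ℤ[ω] ⧸ (p)`, and this quotient
has exactly `p²` elements. -/
theorem crt_array_dof_eisenstein (p : ℕ) (hp : p.Prime) (m₁ m₂ : ℤ) :
    letI R := AdjoinRoot ((X : ℤ[X]) ^ 2 - X + 1)
    letI ω : R := AdjoinRoot.root _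
    letI m : R := (m₁ : R) + (m₂ : R) * ω
    letI mhat : R := ((m₁ : R) + (m₂ : R)) - (m₂ : R) * ω
    m * mhat = (p : R) → IsCoprime m mhat →
      Function.Surjective (fun ab : R × R =>
        Ideal.Quotient.mk (Ideal.span {(p : R)}) (mhat * ab.1 - m * ab.2)) ∧
      Nat.card (R ⧸ Ideal.span {(p : R)}) = p ^ 2 := by
  intro hmm hcop
  set f : ℤ[X] := (X : ℤ[X]) ^ 2 - X + 1 with hf
  set R := AdjoinRoot f
  haveI : Fact p.Prime := ⟨hp⟩
  constructor
  · intro c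
    obtain ⟨x, rfl⟩ := Ideal.Quotient.mk_surjective c
    obtain ⟨α, β, h⟩ := hcop
    refine ⟨(β * x, -(α * x)), ?_⟩
    simp only
    congr 1
    linear_combination x * h
  · have hmonic : f.Monic := by unfold f; monicity!
    have hdeg : f.natDegree = 2 := by unfold f; compute_degree!
    set I : Ideal ℤ := Ideal.span {(p : ℤ)} with hI
    have hspan : Ideal.span {(p : R)} = I.map (AdjoinRoot.of f) := by
      rw [hI, Ideal.map_span, Set.image_singleton]
      norm_num
      rfl
    rw [hspan]
    have e1 := AdjoinRoot.quotAdjoinRootEquivQuotPolynomialQuot I f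
    set g : (ZMod p)[X] := f.map (Int.castRingHom (ZMod p)) with hg
    have hmapmap : (f.map (Ideal.Quotient.mk I)).map
        ((Int.quotientSpanNatEquivZMod p : ℤ ⧸ I ≃+* ZMod p) : (ℤ ⧸ I) →+* ZMod p) = g := by
      rw [Polynomial.map_map, hg]
      congr 1
    have e2 := Ideal.quotientEquiv (Ideal.span {f.map (Ideal.Quotient.mk I)})
      (Ideal.span {g}) (Polynomial.mapEquiv (Int.quotientSpanNatEquivZMod p))
      (by rw [Ideal.map_span, Set.image_singleton]
          congr 1
          simpa [Polynomial.mapEquiv] using hmapmap.symm)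
    have hgmonic : g.Monic := hmonic.map _
    have hgdeg : g.natDegree = 2 := by rw [hg, hmonic.natDegree_map, hdeg]
    have hgne : g ≠ 0 := hgmonic.ne_zero
    let pb2 : PowerBasis (ZMod p) (AdjoinRoot g) := AdjoinRoot.powerBasis hgne
    haveI : Module.Finite (ZMod p) (AdjoinRoot g) := Module.Finite.of_basis pb2.basis
    haveI : Finite (AdjoinRoot g) := Module.finite_of_finite (ZMod p)
    have hfr : Module.finrank (ZMod p) (AdjoinRoot g) = 2 := by
      rw [pb2.finrank]
      show g.natDegree = 2
      exact hgdeg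
    have hcard : Nat.card (AdjoinRoot g) = p ^ 2 := by
      haveI : Fintype (AdjoinRoot g) := Fintype.ofFinite _
      rw [Nat.card_eq_fintype_card, Module.card_eq_pow_finrank (K := ZMod p), ZMod.card, hfr]
    calc Nat.card (R ⧸ I.map (AdjoinRoot.of f))
        = Nat.card ((ZMod p)[X] ⧸ Ideal.span {g}) := Nat.card_congr (e1.trans e2).toEquiv
      _ = Nat.card (AdjoinRoot g) := rfl
      _ = p ^ 2 := hcard
end
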